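/- Let m, n ≥ 1, let ψ : ℝ₊ → V, and for q ∈ 𝔽[X]^m with q ≠ 0 define B_q = {A ∈ I^{mn} : there exists p ∈ 𝔽[X]^n with ‖qA − p‖_∞ < ψ(‖q‖_∞)}. Then μ(B_q) = ψ(‖q‖_∞)^n. -/

import Mathlib

open MeasureTheory Filter Asymptotics
open scoped Classical

/-- The absolute value on `L`, the field of formal Laurent series in `X⁻¹` over
the finite field `F` with `k = Fintype.card F` elements (here realised as
`LaurentSeries F` in the variable `t = X⁻¹`): `‖x‖ = k ^ (-order x)`, `‖0‖ = 0`. -/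
noncomputable def lnorm (F : Type*) [Field F] [Fintype F] (x : LaurentSeries F) : ℝ :=
  if x = 0 then 0 else (Fintype.card F : ℝ) ^ (-x.order)

/-- The embedding of the polynomial ring `F[X]` into `L`, sending `X` to the
Laurent series with a single term of order `-1` (the element of norm `k`). -/
noncomputable def polyToL (F : Type*) [Field F] [Fintype F] (p : Polynomial F) :
    LaurentSeries F :=
  Polynomial.aeval (HahnSeries.single (-1 : ℤ) (1 : F)) p

/-- Sup norm `‖·‖_∞` of a vector over `L`. -/
noncomputable def vnorm (F : Type*) [Field F] [Fintype F] {ι : Type*}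
    (v : ι → LaurentSeries F) : ℝ :=
  ⨆ i, lnorm F (v i)

/-- Sup norm `‖·‖_∞` of a vector of polynomials, viewed inside `L`. -/
noncomputable def pvnorm (F : Type*) [Field F] [Fintype F] {ι : Type*}
    (q : ι → Polynomial F) : ℝ :=
  vnorm F fun i => polyToL F (q i)

/-- The row vector `q A ∈ L^n`, for `q ∈ F[X]^m` and an `m × n` matrix `A` over `L`. -/
noncomputable def rowMul (F : Type*) [Field F] [Fintype F] {m n : ℕ}
    (q : Fin m → Polynomial F) (A : Fin m → Fin n → LaurentSeries F) :
    Fin n → LaurentSeries F :=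
  fun j => ∑ i, polyToL F (q i) * A i j

noncomputable instance (F : Type*) [Field F] [Fintype F] :
    MeasurableSpace (LaurentSeries F) := borel _

/-- The unit ball `I^{mn}` in the space of `m × n` matrices over `L`. -/
def unitBallM (F : Type*) [Field F] [Fintype F] (m n : ℕ) :
    Set (Fin m → Fin n → LaurentSeries F) :=
  {A | ∀ i j, lnorm F (A i j) < 1}

/-- The set `B_q ⊆ I^{mn}` of matrices `A` in the unit ball for which some
`p ∈ F[X]^n` satisfies `‖q A - p‖_∞ < ψ(‖q‖_∞)`. -/
def approxSet (F : Type*) [Field F] [Fintype F] {m n : ℕ} (ψ : ℝ → ℝ)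
    (q : Fin m → Polynomial F) : Set (Fin m → Fin n → LaurentSeries F) :=
  {A | (∀ i j, lnorm F (A i j) < 1) ∧
    ∃ p : Fin n → Polynomial F,
      vnorm F (fun j => rowMul F q A j - polyToL F (p j)) < ψ (pvnorm F q)}

/-!
Write `ψ(‖q‖_∞) = k⁻ʲ`. Since every Laurent series is a polynomial plus a series of norm `< 1`,
`‖x - p‖ < k⁻ʲ` is solvable in `p ∈ F[X]` iff the coefficients of `X⁻¹, …, X⁻ʲ` in `x` vanish.
So `B_q` is the kernel, inside the additive group `I^{mn}`, of the additive map reading off these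
coefficients of the entries of `qA`. This map is onto `F^{n × j}` (divide by a nonzero entry of `q`,
which has norm `≥ 1`), so `I^{mn}` is the disjoint union of `k^{jn}` translates of `B_q`, all of the
same Haar measure.
-/

open scoped Polynomial

theorem AddSubgroup.measure_eq_card_mul_measure_inf_ker {G M : Type*} [AddGroup G]
    [MeasurableSpace G] [MeasurableAdd G] (μ : Measure G) [μ.IsAddLeftInvariant]
    [AddGroup M] [Fintype M] [MeasurableSpace M] [MeasurableSingletonClass M]
    (U : AddSubgroup G) (φ : G →+ M) (hφ : Measurable φ)
    (hsurj : ∀ t, ∃ g ∈ U, φ g = t) :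
    μ U = Fintype.card M * μ (U ⊓ φ.ker : AddSubgroup G) := by
  have hfiber : ∀ t, μ (φ ⁻¹' {t} ∩ U) = μ (U ⊓ φ.ker : AddSubgroup G) := by
    intro t
    obtain ⟨g, hgU, rfl⟩ := hsurj t
    rw [← measure_preimage_add μ (-g) (U ⊓ φ.ker : AddSubgroup G)]
    congr 1
    ext x
    simp only [Set.mem_inter_iff, Set.mem_preimage, Set.mem_singleton_iff, SetLike.mem_coe,
      AddSubgroup.mem_inf, AddMonoidHom.mem_ker, map_add, map_neg, neg_add_eq_zero,
      U.add_mem_cancel_left (U.neg_mem hgU)]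
    exact ⟨fun h => ⟨h.2, h.1.symm⟩, fun h => ⟨h.2.symm, h.1⟩⟩
  calc μ U = μ.restrict U (φ ⁻¹' (Finset.univ : Finset M)) := by
        rw [Finset.coe_univ, Set.preimage_univ, Measure.restrict_apply_univ]
    _ = ∑ t : M, μ (φ ⁻¹' {t} ∩ U) := by
        rw [← sum_measure_preimage_singleton _ fun t _ => hφ (measurableSet_singleton t)]
        exact Finset.sum_congr rfl fun t _ =>
          Measure.restrict_apply (hφ (measurableSet_singleton t))
    _ = Fintype.card M * μ (U ⊓ φ.ker : AddSubgroup G) := by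
        simp [hfiber]

section LaurentSeries

variable {F : Type*} [Field F] [Fintype F]

theorem polyToL_monomial (u : ℕ) (a : F) :
    polyToL F (Polynomial.monomial u a) = HahnSeries.single (-(u : ℤ)) a := by
  rw [polyToL, Polynomial.aeval_monomial, HahnSeries.single_pow, one_pow,
    HahnSeries.algebraMap_apply', show algebraMap F (PowerSeries F) a = PowerSeries.C a from rfl,
    HahnSeries.ofPowerSeries_C, HahnSeries.C_apply, HahnSeries.single_mul_single, zero_add,
    mul_one, nsmul_eq_mul, mul_neg, mul_one]

theorem coeff_polyToL (p : F[X]) (s : ℤ) :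
    (polyToL F p).coeff s = if s ≤ 0 then p.coeff (-s).toNat else 0 := by
  induction p using Polynomial.induction_on' with
  | add p r hp hr =>
    rw [polyToL, map_add, HahnSeries.coeff_add, ← polyToL, ← polyToL, hp, hr]
    split_ifs <;> simp
  | monomial u a =>
    rw [polyToL_monomial, HahnSeries.coeff_single, Polynomial.coeff_monomial]
    split_ifs <;> first | rfl | omega

theorem coeff_polyToL_of_pos (p : F[X]) {s : ℤ} (hs : 0 < s) : (polyToL F p).coeff s = 0 := by
  rw [coeff_polyToL, if_neg (by omega)]

theorem coeff_polyToL_neg_natCast (p : F[X]) (u : ℕ) :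
    (polyToL F p).coeff (-(u : ℤ)) = p.coeff u := by
  rw [coeff_polyToL, if_pos (by omega), neg_neg, Int.toNat_natCast]

theorem order_polyToL_nonpos {p : F[X]} (hp : p ≠ 0) : (polyToL F p).order ≤ 0 := by
  have hlead : (polyToL F p).coeff (-(p.natDegree : ℤ)) ≠ 0 := by
    rwa [coeff_polyToL_neg_natCast, ← Polynomial.leadingCoeff, Polynomial.leadingCoeff_ne_zero]
  exact (HahnSeries.order_le_of_coeff_ne_zero hlead).trans (by omega)

theorem polyToL_ne_zero {p : F[X]} (hp : p ≠ 0) : polyToL F p ≠ 0 := by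
  intro h
  apply hp
  ext u
  rw [← coeff_polyToL_neg_natCast, h, HahnSeries.coeff_zero, Polynomial.coeff_zero]

/-- The polynomial part of `x`; it exists because `x` has only finitely many terms of
nonpositive order. -/
theorem exists_coeff_polyToL_eq (x : LaurentSeries F) :
    ∃ p : F[X], ∀ s ≤ 0, (polyToL F p).coeff s = x.coeff s := by
  refine ⟨∑ u ∈ Finset.range ((-x.order).toNat + 1),
    Polynomial.monomial u (x.coeff (-(u : ℤ))), fun s hs => ?_⟩
  rw [coeff_polyToL, if_pos hs, Polynomial.finsetSum_coeff]
  simp only [Polynomial.coeff_monomial, Finset.sum_ite_eq', Finset.mem_range]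
  split_ifs with h
  · rw [show -(((-s).toNat : ℕ) : ℤ) = s by omega]
  · exact (HahnSeries.coeff_eq_zero_of_lt_order (by omega)).symm

theorem one_lt_card_real : (1 : ℝ) < Fintype.card F := by
  exact_mod_cast Fintype.one_lt_card

theorem lnorm_nonneg (x : LaurentSeries F) : 0 ≤ lnorm F x := by
  unfold lnorm
  split_ifs
  exacts [le_rfl, zpow_nonneg (Nat.cast_nonneg _) _]

theorem lnorm_lt_zpow_iff (x : LaurentSeries F) (e : ℤ) :
    lnorm F x < (Fintype.card F : ℝ) ^ e ↔ ∀ s ≤ -e, x.coeff s = 0 := by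
  by_cases hx : x = 0
  · simp only [lnorm, hx, HahnSeries.coeff_zero, implies_true, iff_true]
    exact zpow_pos (zero_lt_one.trans one_lt_card_real) e
  · rw [lnorm, if_neg hx, zpow_lt_zpow_iff_right₀ one_lt_card_real]
    refine ⟨fun h s hs => HahnSeries.coeff_eq_zero_of_lt_order (by omega), fun h => ?_⟩
    by_contra! hle
    exact HahnSeries.coeff_order_eq_zero.not.mpr hx (h _ (by omega))

theorem lnorm_lt_one_iff (x : LaurentSeries F) : lnorm F x < 1 ↔ ∀ s ≤ 0, x.coeff s = 0 := by
  simpa using lnorm_lt_zpow_iff x 0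

theorem lnorm_mul (x y : LaurentSeries F) : lnorm F (x * y) = lnorm F x * lnorm F y := by
  by_cases hx : x = 0
  · simp [lnorm, hx]
  by_cases hy : y = 0
  · simp [lnorm, hy]
  have hk : (Fintype.card F : ℝ) ≠ 0 := (zero_lt_one.trans one_lt_card_real).ne'
  rw [lnorm, lnorm, lnorm, if_neg (mul_ne_zero hx hy), if_neg hx, if_neg hy,
    HahnSeries.order_mul hx hy, neg_add, zpow_add₀ hk]

theorem lnorm_inv (x : LaurentSeries F) : lnorm F x⁻¹ = (lnorm F x)⁻¹ := by
  by_cases hx : x = 0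
  · simp [lnorm, hx]
  refine eq_inv_of_mul_eq_one_left ?_
  rw [← lnorm_mul, inv_mul_cancel₀ hx, lnorm, if_neg one_ne_zero, HahnSeries.order_one, neg_zero,
    zpow_zero]

theorem one_le_lnorm_polyToL {p : F[X]} (hp : p ≠ 0) : 1 ≤ lnorm F (polyToL F p) := by
  rw [lnorm, if_neg (polyToL_ne_zero hp)]
  exact one_le_zpow₀ one_lt_card_real.le (by linarith [order_polyToL_nonpos hp])

theorem vnorm_lt_iff {ι : Type*} [Finite ι] (v : ι → LaurentSeries F) {r : ℝ} (hr : 0 < r) :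
    vnorm F v < r ↔ ∀ i, lnorm F (v i) < r := by
  rcases isEmpty_or_nonempty ι with hι | hι
  · simp [vnorm, Real.iSup_of_isEmpty, hr]
  obtain ⟨i₀, hi₀⟩ := exists_eq_ciSup_of_finite (f := fun i => lnorm F (v i))
  rw [vnorm, ← hi₀]
  exact ⟨fun h i => (Finite.le_ciSup (fun i => lnorm F (v i)) i).trans_lt (hi₀ ▸ h), fun h => h i₀⟩

theorem one_le_pvnorm {ι : Type*} [Finite ι] {q : ι → F[X]} (hq : q ≠ 0) : 1 ≤ pvnorm F q := by
  obtain ⟨i, hi⟩ := Function.ne_iff.mp hq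
  exact (one_le_lnorm_polyToL hi).trans (Finite.le_ciSup (fun i => lnorm F (polyToL F (q i))) i)

theorem exists_lnorm_sub_polyToL_lt_iff (x : LaurentSeries F) (j : ℕ) :
    (∃ p : F[X], lnorm F (x - polyToL F p) < (Fintype.card F : ℝ) ^ (-(j : ℤ))) ↔
      ∀ s : Fin j, x.coeff ((s : ℕ) + 1) = 0 := by
  simp only [lnorm_lt_zpow_iff, neg_neg, HahnSeries.coeff_sub]
  constructor
  · rintro ⟨p, hp⟩ s
    have hs : (0 : ℤ) < (s : ℕ) + 1 := by omega
    simpa [coeff_polyToL_of_pos p hs] using hp ((s : ℕ) + 1) (by have := s.isLt; omega)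
  · intro hx
    obtain ⟨p, hp⟩ := exists_coeff_polyToL_eq x
    refine ⟨p, fun s hs => ?_⟩
    rcases le_or_gt s 0 with hs0 | hs0
    · rw [hp s hs0, sub_self]
    · rw [coeff_polyToL_of_pos p hs0, sub_zero]
      have hs' : (((s - 1).toNat : ℕ) : ℤ) + 1 = s := by omega
      simpa only [hs'] using hx ⟨(s - 1).toNat, by omega⟩

end LaurentSeries

section Matrix

variable {F : Type*} [Field F] [Fintype F] {m n : ℕ}

theorem coeff_polyToL_mul (p : F[X]) (y : LaurentSeries F) (s : ℤ) :
    (polyToL F p * y).coeff s = ∑ u ∈ p.support, p.coeff u * y.coeff (s + u) := by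
  conv_lhs => rw [p.as_sum_support, polyToL, map_sum, Finset.sum_mul, HahnSeries.coeff_sum]
  refine Finset.sum_congr rfl fun u _ => ?_
  rw [← polyToL, polyToL_monomial, ← HahnSeries.coeff_single_mul_add (b := -(u : ℤ)),
    add_neg_cancel_right]

def unitBallAddSubgroup (F : Type*) [Field F] [Fintype F] (m n : ℕ) :
    AddSubgroup (Fin m → Fin n → LaurentSeries F) where
  carrier := unitBallM F m n
  add_mem' {A B} hA hB i j := (lnorm_lt_one_iff _).mpr fun s hs => by
    simp [(lnorm_lt_one_iff _).mp (hA i j) s hs, (lnorm_lt_one_iff _).mp (hB i j) s hs]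
  zero_mem' i j := by simp [lnorm]
  neg_mem' {A} hA i j := (lnorm_lt_one_iff _).mpr fun s hs => by
    simp [(lnorm_lt_one_iff _).mp (hA i j) s hs]

/-- `rowCoeffHom F q j A c s` is the coefficient of `X^{-(s+1)}` in `(q A)_c`. -/
noncomputable def rowCoeffHom (F : Type*) [Field F] [Fintype F] (q : Fin m → F[X]) (j : ℕ) :
    (Fin m → Fin n → LaurentSeries F) →+ (Fin n → Fin j → F) where
  toFun A c s := (rowMul F q A c).coeff ((s : ℕ) + 1)
  map_zero' := by ext; simp [rowMul]
  map_add' A B := by ext; simp [rowMul, mul_add, Finset.sum_add_distrib]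

theorem rowMul_pi_single (q : Fin m → F[X]) (i : Fin m) (v : Fin n → LaurentSeries F) :
    rowMul F q (Pi.single i v) = fun c => polyToL F (q i) * v c := by
  ext1 c
  rw [rowMul, Finset.sum_eq_single i (fun i' _ hi' => by simp [hi']) (by simp)]
  simp

theorem exists_mem_unitBall_rowCoeffHom_eq {q : Fin m → F[X]} (hq : q ≠ 0) (j : ℕ)
    (t : Fin n → Fin j → F) :
    ∃ A ∈ unitBallAddSubgroup F m n, rowCoeffHom F q j A = t := by
  obtain ⟨i, hi⟩ := Function.ne_iff.mp hq
  set y : Fin n → LaurentSeries F :=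
    fun c => ∑ s : Fin j, HahnSeries.single ((s : ℕ) + 1 : ℤ) (t c s) with hy
  have hy_coeff : ∀ c (s : Fin j), (y c).coeff ((s : ℕ) + 1) = t c s := by
    intro c s
    rw [hy, HahnSeries.coeff_sum, Finset.sum_eq_single s (fun s' _ hs' => ?_) (by simp)]
    · simp
    · rw [HahnSeries.coeff_single, if_neg]
      exact fun h => hs' (Fin.ext (by omega))
  have hy_ball : ∀ c, lnorm F (y c) < 1 := by
    intro c
    rw [lnorm_lt_one_iff]
    intro s hs
    rw [hy, HahnSeries.coeff_sum]
    exact Finset.sum_eq_zero fun s' _ => by rw [HahnSeries.coeff_single, if_neg (by omega)]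
  refine ⟨Pi.single i fun c => (polyToL F (q i))⁻¹ * y c, fun i' c => ?_, ?_⟩
  · rcases eq_or_ne i' i with rfl | hi'
    · rw [Pi.single_eq_same, lnorm_mul, lnorm_inv]
      exact (mul_le_of_le_one_left (lnorm_nonneg _)
        (inv_le_one_of_one_le₀ (one_le_lnorm_polyToL hi))).trans_lt (hy_ball c)
    · simp [Pi.single_eq_of_ne hi', lnorm]
  · ext c s
    simp [rowCoeffHom, rowMul_pi_single, mul_inv_cancel_left₀ (polyToL_ne_zero hi), hy_coeff]

theorem approxSet_eq {ψ : ℝ → ℝ} (q : Fin m → F[X]) {j : ℕ}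
    (hψ : ψ (pvnorm F q) = (Fintype.card F : ℝ) ^ (-(j : ℤ))) :
    approxSet F (n := n) ψ q = (unitBallAddSubgroup F m n ⊓ (rowCoeffHom F q j).ker :) := by
  have hpos : (0 : ℝ) < (Fintype.card F : ℝ) ^ (-(j : ℤ)) :=
    zpow_pos (zero_lt_one.trans one_lt_card_real) _
  ext A
  simp only [approxSet, Set.mem_ofPred_eq, SetLike.mem_coe, AddSubgroup.mem_inf,
    AddMonoidHom.mem_ker, hψ, vnorm_lt_iff _ hpos]
  refine and_congr Iff.rfl ?_
  refine (Classical.skolem (p := fun c (p : F[X]) =>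
    lnorm F (rowMul F q A c - polyToL F p) < (Fintype.card F : ℝ) ^ (-(j : ℤ)))).symm.trans ?_
  simp only [exists_lnorm_sub_polyToL_lt_iff, funext_iff]
  rfl

end Matrix

section Measurability

variable {F : Type*} [Field F] [Fintype F]

instance : BorelSpace (LaurentSeries F) := ⟨rfl⟩

theorem measurableSet_coeff_eq (s : ℤ) (a : F) :
    MeasurableSet {x : LaurentSeries F | x.coeff s = a} := by
  let : UniformSpace F := ⊥
  have : DiscreteTopology F := ⟨rfl⟩
  exact ((isOpen_discrete {a}).preimage
    (LaurentSeries.uniformContinuous_coeff s).continuous).measurableSet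

theorem measurable_coeff [MeasurableSpace F] [DiscreteMeasurableSpace F] (s : ℤ) :
    Measurable fun x : LaurentSeries F => x.coeff s :=
  measurable_to_countable fun x => measurableSet_coeff_eq s (x.coeff s)

theorem measurable_rowCoeffHom [MeasurableSpace F] [DiscreteMeasurableSpace F] {m n : ℕ}
    (q : Fin m → F[X]) (j : ℕ) : Measurable (rowCoeffHom F (n := n) q j) := by
  have : MeasurableAdd₂ F := DiscreteMeasurableSpace.toMeasurableAdd₂
  refine measurable_pi_lambda _ fun c => measurable_pi_lambda _ fun s => ?_
  simp only [rowCoeffHom, AddMonoidHom.coe_mk, ZeroHom.coe_mk, rowMul, HahnSeries.coeff_sum,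
    coeff_polyToL_mul]
  exact Finset.measurable_sum _ fun i _ => Finset.measurable_sum _ fun u _ =>
    ((measurable_coeff _).comp ((measurable_pi_apply c).comp (measurable_pi_apply i))).const_mul _

end Measurability

theorem measure_approxSet_general
    {F : Type*} [Field F] [Fintype F]
    (m n : ℕ)
    (ψ : ℝ → ℝ)
    (hψV : ∀ x > (0 : ℝ), ∃ j : ℕ, ψ x = (Fintype.card F : ℝ) ^ (-(j : ℤ)))
    (μ : Measure (Fin m → Fin n → LaurentSeries F)) [μ.IsAddHaarMeasure]
    (hμ : μ (unitBallM F m n) = 1)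
    (q : Fin m → Polynomial F) (hq : q ≠ 0) :
    μ (approxSet F (n := n) ψ q) = ENNReal.ofReal (ψ (pvnorm F q) ^ n) := by
  obtain ⟨j, hj⟩ := hψV _ (zero_lt_one.trans_le (one_le_pvnorm hq))
  let : MeasurableSpace F := ⊤
  have hball := (unitBallAddSubgroup F m n).measure_eq_card_mul_measure_inf_ker μ
    (rowCoeffHom F q j) (measurable_rowCoeffHom q j) (exists_mem_unitBall_rowCoeffHom_eq hq j)
  rw [show ((unitBallAddSubgroup F m n : Set _) = unitBallM F m n) from rfl, hμ] at hball
  rw [approxSet_eq q hj, ENNReal.eq_inv_of_mul_eq_one_left ((mul_comm _ _).trans hball.symm), hj,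
    Fintype.card_fun, Fintype.card_fun, Fintype.card_fin, Fintype.card_fin, zpow_neg, zpow_natCast,
    inv_pow, ENNReal.ofReal_inv_of_pos (by positivity), ← Nat.cast_pow, ← Nat.cast_pow,
    ENNReal.ofReal_natCast]

/-- **Proposition 1.**  For `m, n ≥ 1`, `ψ : ℝ₊ → V` and nonzero `q ∈ F[X]^m`,
the set `B_q = {A ∈ I^{mn} : ∃ p ∈ F[X]^n, ‖q A - p‖_∞ < ψ(‖q‖_∞)}` has Haar
measure `μ(B_q) = ψ(‖q‖_∞)^n` (with `μ` normalised so `μ(I^{mn}) = 1`). -/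
theorem measure_approxSet
    {F : Type*} [Field F] [Fintype F]
    (m n : ℕ) (hm : 1 ≤ m) (hn : 1 ≤ n)
    (ψ : ℝ → ℝ)
    (hψV : ∀ x > (0 : ℝ), ∃ j : ℕ, ψ x = (Fintype.card F : ℝ) ^ (-(j : ℤ)))
    (μ : Measure (Fin m → Fin n → LaurentSeries F)) [μ.IsAddHaarMeasure]
    (hμ : μ (unitBallM F m n) = 1)
    (q : Fin m → Polynomial F) (hq : q ≠ 0) :
    μ (approxSet F (n := n) ψ q) = ENNReal.ofReal (ψ (pvnorm F q) ^ n) :=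
  measure_approxSet_general m n ψ hψV μ hμ q hq
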